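/- Analytic continuation of one-particle wave functions of wedge-localized test functions: let m > 0 and g ∈ 𝒮(ℝ²) be a Schwartz function with supp g ⊆ W_L := {x ∈ ℝ² : x₁ < −|x₀|}, and set g^±(θ) := (1/2π)∫_{ℝ²} g(±x)·exp(i·m(cosh(θ)x₀ − sinh(θ)x₁)) d²x for θ ∈ ℝ. Then there exists a function F : ℂ → ℂ which is continuous on the closed strip {ζ : 0 ≤ Im ζ ≤ π}, holomorphic on the open strip {ζ : 0 < Im ζ < π}, satisfies F(θ) = g⁺(θ) and F(θ + iπ) = g⁻(θ) for all θ ∈ ℝ, and satisfies F(ζ) → 0 as |Re ζ| → ∞, uniformly for Im ζ in compact subsets of (0, π). -/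

import Mathlib

/-!
Complexify the rapidity: for ζ = θ + iλ the phase i·p(ζ)·x has real part
−m sin λ (sinh θ·x₀ − cosh θ·x₁) ≤ −m sin λ cosh θ (−x₁ − |x₀|), which is ≤ 0 on the left
wedge when 0 ≤ λ ≤ π. So the integral defining g⁺ makes sense on the closed strip, dominated
by |g|, and dominated convergence gives continuity and holomorphy. At λ = π, cosh and sinh
change sign, which turns g⁺ into g⁻. For λ in [a, b] ⊂ (0, π) the factor
exp(−m sin λ cosh θ (−x₁ − |x₀|)) tends to 0 pointwise on the wedge as |θ| → ∞, so the
integral does too.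
-/

open MeasureTheory Complex

noncomputable section

/-- The rapidity wave function h^±(θ) = (1/2π)∫ h(±x)·e^{ip(θ)·x} d²x,
with p(θ)·x = m(cosh θ·x₀ − sinh θ·x₁); here `waveFn m h` gives h⁺ when applied to h
and h⁻ when applied to x ↦ h(−x). -/
def waveFn (m : ℝ) (h : ℝ × ℝ → ℂ) (θ : ℝ) : ℂ :=
  (1 / (2 * Real.pi)) *
    ∫ x : ℝ × ℝ, h x *
      Complex.exp (Complex.I * ((m * (Real.cosh θ * x.1 - Real.sinh θ * x.2) : ℝ) : ℂ))

open Filter Set Topology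

/-- `i p(ζ)·x`, the phase of `waveFn` with the rapidity continued to `ζ ∈ ℂ`. -/
def wavePhase (m : ℝ) (ζ : ℂ) (x : ℝ × ℝ) : ℂ :=
  I * (m * (cosh ζ * x.1 - sinh ζ * x.2))

def waveFnExt (m : ℝ) (h : ℝ × ℝ → ℂ) (ζ : ℂ) : ℂ :=
  (1 / (2 * Real.pi)) * ∫ x : ℝ × ℝ, h x * exp (wavePhase m ζ x)

def leftWedge : Set (ℝ × ℝ) := {x | x.2 < -|x.1|}

def wedgeDepth (x : ℝ × ℝ) : ℝ := -x.2 - |x.1|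

theorem Complex.cosh_im (ζ : ℂ) : (cosh ζ).im = Real.sinh ζ.re * Real.sin ζ.im := by
  conv_lhs => rw [← re_add_im ζ, cosh_add, cosh_mul_I, sinh_mul_I]
  simp [sinh_ofReal_re, cosh_ofReal_re, sin_ofReal_re, cos_ofReal_re]

theorem Complex.sinh_im (ζ : ℂ) : (sinh ζ).im = Real.cosh ζ.re * Real.sin ζ.im := by
  conv_lhs => rw [← re_add_im ζ, sinh_add, cosh_mul_I, sinh_mul_I]
  simp [sinh_ofReal_re, cosh_ofReal_re, sin_ofReal_re, cos_ofReal_re]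

theorem Real.tendsto_cosh_atTop : Tendsto Real.cosh atTop atTop :=
  tendsto_atTop_mono (fun x => by rw [Real.cosh_eq]; linarith [Real.exp_pos (-x)])
    (Real.tendsto_exp_atTop.atTop_div_const two_pos)

theorem wavePhase_re (m : ℝ) (ζ : ℂ) (x : ℝ × ℝ) :
    (wavePhase m ζ x).re =
      -(m * Real.sin ζ.im * (Real.sinh ζ.re * x.1 - Real.cosh ζ.re * x.2)) := by
  simp only [wavePhase, mul_re, mul_im, I_re, I_im, sub_im, ofReal_re, ofReal_im, cosh_im,
    sinh_im]
  ring

theorem wavePhase_ofReal (m θ : ℝ) (x : ℝ × ℝ) :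
    wavePhase m θ x = I * ((m * (Real.cosh θ * x.1 - Real.sinh θ * x.2) : ℝ) : ℂ) := by
  simp [wavePhase]

theorem wavePhase_add_pi_mul_I (m : ℝ) (ζ : ℂ) (x : ℝ × ℝ) :
    wavePhase m (ζ + Real.pi * I) x = wavePhase m ζ (-x) := by
  simp only [wavePhase, cosh_add_pi_mul_I, sinh_add_pi_mul_I, Prod.fst_neg, Prod.snd_neg,
    ofReal_neg]
  ring

theorem hasDerivAt_wavePhase (m : ℝ) (x : ℝ × ℝ) (ζ : ℂ) :
    HasDerivAt (wavePhase m · x) (I * (m * (sinh ζ * x.1 - cosh ζ * x.2))) ζ :=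
  ((((hasDerivAt_cosh ζ).mul_const _).sub
    ((hasDerivAt_sinh ζ).mul_const _)).const_mul _).const_mul _

theorem norm_deriv_wavePhase_le {m : ℝ} (hm : 0 ≤ m) (ζ : ℂ) (x : ℝ × ℝ) :
    ‖I * (m * (sinh ζ * x.1 - cosh ζ * x.2))‖ ≤ m * (‖sinh ζ‖ + ‖cosh ζ‖) * ‖x‖ := by
  rw [norm_mul, norm_I, one_mul, norm_mul, norm_real, Real.norm_of_nonneg hm, mul_assoc]
  gcongr
  refine (norm_sub_le _ _).trans ?_
  rw [add_mul, norm_mul, norm_mul, norm_real, norm_real]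
  gcongr
  exacts [norm_fst_le x, norm_snd_le x]

theorem continuous_wavePhase (m : ℝ) (ζ : ℂ) : Continuous (wavePhase m ζ) := by
  unfold wavePhase; fun_prop

theorem cosh_mul_wedgeDepth_le (θ : ℝ) (x : ℝ × ℝ) :
    Real.cosh θ * wedgeDepth x ≤ Real.sinh θ * x.1 - Real.cosh θ * x.2 := by
  have hsinh : |Real.sinh θ| ≤ Real.cosh θ := by
    rw [Real.abs_sinh, ← Real.cosh_abs]; exact (Real.sinh_lt_cosh _).le
  have : -(Real.cosh θ * |x.1|) ≤ Real.sinh θ * x.1 := by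
    nlinarith [neg_abs_le (Real.sinh θ * x.1), abs_mul (Real.sinh θ) x.1, abs_nonneg x.1]
  unfold wedgeDepth; linarith

theorem waveFnExt_ofReal (m : ℝ) (h : ℝ × ℝ → ℂ) (θ : ℝ) :
    waveFnExt m h θ = waveFn m h θ := by
  simp only [waveFnExt, waveFn, wavePhase_ofReal]

theorem waveFnExt_add_pi_mul_I (m : ℝ) (h : ℝ × ℝ → ℂ) (θ : ℝ) :
    waveFnExt m h (θ + Real.pi * I) = waveFn m (fun x => h (-x)) θ := by
  rw [waveFn, ← integral_neg_eq_self]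
  simp only [waveFnExt, wavePhase_add_pi_mul_I, ← wavePhase_ofReal, neg_neg]

section Strip

variable {m : ℝ} {h : ℝ × ℝ → ℂ}

theorem wedgeDepth_pos_of_ne_zero (hsupp : Function.support h ⊆ leftWedge)
    {x : ℝ × ℝ} (hx : h x ≠ 0) : 0 < wedgeDepth x := by
  have : x.2 < -|x.1| := hsupp hx
  unfold wedgeDepth; linarith

theorem norm_mul_exp_wavePhase_le (hm : 0 ≤ m) (hsupp : Function.support h ⊆ leftWedge)
    {s : ℝ} {ζ : ℂ} (hs : 0 ≤ s) (hsin : s ≤ Real.sin ζ.im) (x : ℝ × ℝ) :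
    ‖h x * exp (wavePhase m ζ x)‖ ≤
      ‖h x‖ * Real.exp (-(m * s * Real.cosh ζ.re * wedgeDepth x)) := by
  by_cases hx : h x = 0
  · simp [hx]
  rw [norm_mul, norm_exp, wavePhase_re]
  refine mul_le_mul_of_nonneg_left (Real.exp_le_exp.2 (neg_le_neg ?_)) (norm_nonneg _)
  have hdepth := (wedgeDepth_pos_of_ne_zero hsupp hx).le
  calc m * s * Real.cosh ζ.re * wedgeDepth x
      = m * s * (Real.cosh ζ.re * wedgeDepth x) := by ring
    _ ≤ m * Real.sin ζ.im * (Real.sinh ζ.re * x.1 - Real.cosh ζ.re * x.2) :=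
      mul_le_mul (mul_le_mul_of_nonneg_left hsin hm) (cosh_mul_wedgeDepth_le ζ.re x)
        (by positivity) (mul_nonneg hm (hs.trans hsin))

theorem norm_mul_exp_wavePhase_le_norm (hm : 0 ≤ m)
    (hsupp : Function.support h ⊆ leftWedge)
    {ζ : ℂ} (hζ : ζ ∈ im ⁻¹' Icc 0 Real.pi) (x : ℝ × ℝ) :
    ‖h x * exp (wavePhase m ζ x)‖ ≤ ‖h x‖ := by
  simpa using norm_mul_exp_wavePhase_le hm hsupp le_rfl
    (Real.sin_nonneg_of_nonneg_of_le_pi hζ.1 hζ.2) x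

theorem norm_mul_exp_neg_wedgeDepth_le (hsupp : Function.support h ⊆ leftWedge)
    {c : ℝ} (hc : 0 ≤ c) (x : ℝ × ℝ) :
    ‖h x‖ * Real.exp (-(c * wedgeDepth x)) ≤ ‖h x‖ := by
  by_cases hx : h x = 0
  · simp [hx]
  have hdepth := (wedgeDepth_pos_of_ne_zero hsupp hx).le
  exact mul_le_of_le_one_right (norm_nonneg _) (Real.exp_le_one_iff.2 (by nlinarith))

theorem aestronglyMeasurable_mul_exp_wavePhase (hint : Integrable h) (ζ : ℂ) :
    AEStronglyMeasurable (fun x => h x * exp (wavePhase m ζ x)) :=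
  hint.aestronglyMeasurable.mul (continuous_wavePhase m ζ).cexp.aestronglyMeasurable

theorem integrable_mul_exp_wavePhase (hm : 0 ≤ m)
    (hsupp : Function.support h ⊆ leftWedge) (hint : Integrable h) {ζ : ℂ}
    (hζ : ζ ∈ im ⁻¹' Icc 0 Real.pi) :
    Integrable (fun x => h x * exp (wavePhase m ζ x)) :=
  hint.norm.mono' (aestronglyMeasurable_mul_exp_wavePhase hint ζ)
    (.of_forall (norm_mul_exp_wavePhase_le_norm hm hsupp hζ))

theorem continuousOn_waveFnExt (hm : 0 ≤ m) (hsupp : Function.support h ⊆ leftWedge)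
    (hint : Integrable h) : ContinuousOn (waveFnExt m h) (im ⁻¹' Icc 0 Real.pi) := by
  refine continuousOn_const.mul (continuousOn_of_dominated
    (fun ζ _ => aestronglyMeasurable_mul_exp_wavePhase hint ζ)
    (fun ζ hζ => .of_forall (norm_mul_exp_wavePhase_le_norm hm hsupp hζ)) hint.norm
    (.of_forall fun x => Continuous.continuousOn ?_))
  unfold wavePhase; fun_prop

theorem differentiableOn_waveFnExt (hm : 0 ≤ m)
    (hsupp : Function.support h ⊆ leftWedge) (hint : Integrable h)
    (hmom : Integrable fun x => ‖x‖ * ‖h x‖) :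
    DifferentiableOn ℂ (waveFnExt m h) (im ⁻¹' Ioo 0 Real.pi) := by
  intro ζ₀ hζ₀
  obtain ⟨C, hC⟩ := (isCompact_closedBall ζ₀ 1).exists_bound_of_continuousOn
    (f := fun ζ => ‖sinh ζ‖ + ‖cosh ζ‖) (by fun_prop)
  set U := im ⁻¹' Ioo 0 Real.pi ∩ Metric.closedBall ζ₀ 1
  have hU : U ∈ 𝓝 ζ₀ := inter_mem ((isOpen_Ioo.preimage continuous_im).mem_nhds hζ₀)
    (Metric.closedBall_mem_nhds ζ₀ one_pos)
  have hderiv_le : ∀ x, ∀ ζ ∈ U,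
      ‖h x * (exp (wavePhase m ζ x) * (I * (m * (sinh ζ * x.1 - cosh ζ * x.2))))‖
        ≤ m * C * (‖x‖ * ‖h x‖) := by
    intro x ζ hζ
    have hsc : ‖sinh ζ‖ + ‖cosh ζ‖ ≤ C := (le_abs_self _).trans (by simpa using hC ζ hζ.2)
    rw [← mul_assoc, norm_mul]
    calc ‖h x * exp (wavePhase m ζ x)‖ * ‖I * (m * (sinh ζ * x.1 - cosh ζ * x.2))‖
        ≤ ‖h x‖ * (m * C * ‖x‖) := by
          gcongr
          · exact norm_mul_exp_wavePhase_le_norm hm hsupp (Ioo_subset_Icc_self hζ.1) x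
          · exact (norm_deriv_wavePhase_le hm ζ x).trans (by gcongr)
      _ = m * C * (‖x‖ * ‖h x‖) := by ring
  have hasDeriv := hasDerivAt_integral_of_dominated_loc_of_deriv_le hU
    (.of_forall (aestronglyMeasurable_mul_exp_wavePhase hint))
    (integrable_mul_exp_wavePhase hm hsupp hint (Ioo_subset_Icc_self hζ₀))
    (hint.aestronglyMeasurable.mul
      (Continuous.aestronglyMeasurable (by unfold wavePhase; fun_prop)))
    (.of_forall hderiv_le) (hmom.const_mul (m * C))
    (.of_forall fun x ζ _ => ((hasDerivAt_wavePhase m x ζ).cexp).const_mul (h x))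
  exact (hasDeriv.2.differentiableAt.const_mul _).differentiableWithinAt

theorem tendsto_integral_norm_mul_exp_neg_wedgeDepth
    (hsupp : Function.support h ⊆ leftWedge) (hint : Integrable h) :
    Tendsto (fun c => ∫ x, ‖h x‖ * Real.exp (-(c * wedgeDepth x))) atTop (𝓝 0) := by
  rw [← integral_zero (ℝ × ℝ) ℝ]
  refine tendsto_integral_filter_of_dominated_convergence (fun x => ‖h x‖)
    (.of_forall fun c => hint.norm.aestronglyMeasurable.mul
      (Continuous.aestronglyMeasurable (by unfold wedgeDepth; fun_prop)))
    ((eventually_ge_atTop 0).mono fun c hc => .of_forall fun x => ?_) hint.norm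
    (.of_forall fun x => ?_)
  · rw [Real.norm_of_nonneg (by positivity)]
    exact norm_mul_exp_neg_wedgeDepth_le hsupp hc x
  · by_cases hx : h x = 0
    · simp [hx]
    simpa using (Real.tendsto_exp_neg_atTop_nhds_zero.comp
      (tendsto_id.atTop_mul_const (wedgeDepth_pos_of_ne_zero hsupp hx))).const_mul ‖h x‖

theorem norm_waveFnExt_le (hm : 0 ≤ m) (hsupp : Function.support h ⊆ leftWedge)
    (hint : Integrable h) {s : ℝ} {ζ : ℂ} (hs : 0 ≤ s) (hsin : s ≤ Real.sin ζ.im) :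
    ‖waveFnExt m h ζ‖ ≤
      1 / (2 * Real.pi) * ∫ x, ‖h x‖ * Real.exp (-(m * s * Real.cosh ζ.re * wedgeDepth x)) := by
  have hbound := norm_mul_exp_wavePhase_le hm hsupp hs hsin
  have hcoef : ‖(1 / (2 * Real.pi) : ℂ)‖ = 1 / (2 * Real.pi) := by
    rw [← ofReal_ofNat, ← ofReal_mul, ← ofReal_one, ← ofReal_div, norm_real,
      Real.norm_of_nonneg (by positivity)]
  rw [waveFnExt, norm_mul, hcoef]
  gcongr
  refine norm_integral_le_of_norm_le (hint.norm.mono' ?_ (.of_forall fun x => ?_))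
    (.of_forall hbound)
  · exact hint.norm.aestronglyMeasurable.mul
      (Continuous.aestronglyMeasurable (by unfold wedgeDepth; fun_prop))
  · rw [Real.norm_of_nonneg (by positivity)]
    exact norm_mul_exp_neg_wedgeDepth_le hsupp
      (mul_nonneg (mul_nonneg hm hs) (Real.cosh_pos _).le) x

theorem exists_norm_waveFnExt_lt (hm : 0 < m) (hsupp : Function.support h ⊆ leftWedge)
    (hint : Integrable h) {a b : ℝ} (ha : 0 < a) (hab : a ≤ b) (hb : b < Real.pi) {ε : ℝ}
    (hε : 0 < ε) :
    ∃ R : ℝ, ∀ ζ : ℂ, a ≤ ζ.im → ζ.im ≤ b → R ≤ |ζ.re| → ‖waveFnExt m h ζ‖ < ε := by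
  set s := min (Real.sin a) (Real.sin b)
  have hs : 0 < s := lt_min (Real.sin_pos_of_pos_of_lt_pi ha (hab.trans_lt hb))
    (Real.sin_pos_of_pos_of_lt_pi (ha.trans_le hab) hb)
  have hdecay : Tendsto (fun θ => 1 / (2 * Real.pi) *
      ∫ x, ‖h x‖ * Real.exp (-(m * s * Real.cosh θ * wedgeDepth x))) atTop (𝓝 0) := by
    simpa using ((tendsto_integral_norm_mul_exp_neg_wedgeDepth hsupp hint).comp
      (Real.tendsto_cosh_atTop.const_mul_atTop (mul_pos hm hs))).const_mul (1 / (2 * Real.pi))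
  obtain ⟨R, hR⟩ := eventually_atTop.1 (hdecay.eventually_lt_const hε)
  refine ⟨R, fun ζ ha' hb' hR' => (norm_waveFnExt_le hm.le hsupp hint hs.le ?_).trans_lt ?_⟩
  · exact strictConcaveOn_sin_Icc.concaveOn.min_le_of_mem_Icc ⟨ha.le, by linarith⟩
      ⟨by linarith, hb.le⟩ ⟨ha', hb'⟩
  · simpa [Real.cosh_abs] using hR |ζ.re| hR'

end Strip

/-- Analytic continuation of the one-particle wave functions of
test functions localized in the left wedge W_L = {x : x₁ < −|x₀|}: g⁺ extends to a
function F, continuous on the closed strip 0 ≤ Im ζ ≤ π, holomorphic in its interior,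
with boundary values F(θ) = g⁺(θ) and F(θ+iπ) = g⁻(θ), and F(ζ) → 0 as |Re ζ| → ∞,
uniformly for Im ζ in compact subsets of (0, π). -/
theorem statement17 (m : ℝ) (hm : 0 < m) (g : SchwartzMap (ℝ × ℝ) ℂ)
    (hsupp : Function.support (⇑g) ⊆ {x : ℝ × ℝ | x.2 < -|x.1|}) :
    ∃ F : ℂ → ℂ,
      ContinuousOn F {ζ : ℂ | 0 ≤ ζ.im ∧ ζ.im ≤ Real.pi} ∧
      DifferentiableOn ℂ F {ζ : ℂ | 0 < ζ.im ∧ ζ.im < Real.pi} ∧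
      (∀ θ : ℝ, F (θ : ℂ) = waveFn m (⇑g) θ) ∧
      (∀ θ : ℝ, F ((θ : ℂ) + Real.pi * Complex.I) = waveFn m (fun x => g (-x)) θ) ∧
      (∀ a b : ℝ, 0 < a → a ≤ b → b < Real.pi →
        ∀ ε : ℝ, 0 < ε → ∃ R : ℝ, ∀ ζ : ℂ,
          a ≤ ζ.im → ζ.im ≤ b → R ≤ |ζ.re| → ‖F ζ‖ < ε) :=
  ⟨waveFnExt m g, continuousOn_waveFnExt hm.le hsupp g.integrable,
    differentiableOn_waveFnExt hm.le hsupp g.integrable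
      (by simpa using g.integrable_pow_mul volume 1),
    waveFnExt_ofReal m g, waveFnExt_add_pi_mul_I m g,
    fun _ _ ha hab hb _ hε => exists_norm_waveFnExt_lt hm hsupp g.integrable ha hab hb hε⟩

end
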